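/- arXiv:2512.03412 — 3 statements merged into one kernel-verified Lean document; each statement's English description precedes it below -/
import Mathlib

section
/- Let r ≥ 1 be an integer and a, x ∈ ℤ, and set G(x,a) = Σ_{u ∈ ℤ/2^rℤ} exp(2πi(xu² + 2au)/2^r). Then: (1) if 2^r ∣ x, one has G(x,a) = 2^r when 2^{r−1} ∣ a and G(x,a) = 0 otherwise; (2) if v_2(x) = r−1, then G(x,a) = 2^r when v_2(2a) = r−1 and G(x,a) = 0 otherwise; (3) if j := v_2(x) ≤ r−2, write x = 2^j x₀ with x₀ odd; then G(x,a) = 0 unless 2^j ∣ a, and in that case, writing a = 2^j a′, one has G(x,a) = 2^{(r+j)/2} · exp(−2πi (a′)² x₀*/2^{r−j}) · χ₈(x₀)^{r−j} · (1 + i^{x₀}), where x₀* is any integer inverse of x₀ modulo 2^{r−j}, 2^{(r+j)/2} is the real power, and i = √−1. -/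
open scoped BigOperators

/-- `exp(2πi c / n)` for `c ∈ ℤ/nℤ`. -/
noncomputable def eZMod (n : ℕ) (c : ZMod n) : ℂ :=
  Complex.exp (2 * Real.pi * Complex.I * (c.val : ℂ) / (n : ℂ))


section GaussAux
open Complex Finset

noncomputable def e (n : ℕ) (m : ℤ) : ℂ :=
  Complex.exp (2 * Real.pi * Complex.I * (m : ℂ) / (n : ℂ))


lemma e_add (n : ℕ) (m₁ m₂ : ℤ) : e n (m₁ + m₂) = e n m₁ * e n m₂ := by
  rw [e, e, e, ← Complex.exp_add]
  congr 1
  push_cast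
  ring

lemma e_nmul (n : ℕ) (k : ℤ) : e n (n * k) = 1 := by
  rcases Nat.eq_zero_or_pos n with h | h
  · simp [e, h]
  · rw [e]
    have hn : (n : ℂ) ≠ 0 := by exact_mod_cast h.ne'
    have : 2 * Real.pi * Complex.I * ((n : ℤ) * k : ℤ) / (n : ℂ) = k * (2 * Real.pi * Complex.I) := by
      push_cast
      field_simp
    rw [this, Complex.exp_int_mul_two_pi_mul_I]

lemma e_congr {n : ℕ} {m₁ m₂ : ℤ} (h : m₁ ≡ m₂ [ZMOD n]) : e n m₁ = e n m₂ := by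
  obtain ⟨k, hk⟩ := Int.ModEq.dvd h
  have h1 : m₁ = m₂ + n * (-k) := by rw [mul_neg]; omega
  rw [h1, e_add, e_nmul, mul_one]

lemma e_eq_one_iff {n : ℕ} (hn : n ≠ 0) (m : ℤ) : e n m = 1 ↔ (n : ℤ) ∣ m := by
  rw [e, Complex.exp_eq_one_iff]
  have hn' : (n : ℂ) ≠ 0 := by exact_mod_cast hn
  constructor
  · rintro ⟨k, hk⟩
    refine ⟨k, ?_⟩
    have h2 : (m : ℂ) = n * k := by
      have : 2 * (Real.pi:ℂ) * Complex.I * (m : ℂ) = 2 * Real.pi * Complex.I * ((n:ℂ) * k) := by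
        field_simp at hk
        rw [hk]
      exact mul_left_cancel₀ Complex.two_pi_I_ne_zero this
    exact_mod_cast h2
  · rintro ⟨k, rfl⟩
    refine ⟨k, ?_⟩
    push_cast
    field_simp

lemma e_mul_nat (n : ℕ) (c : ℤ) (k : ℕ) : e n (c * k) = (e n c) ^ k := by
  induction k with
  | zero => simp [e]
  | succ k ih =>
    have : c * ((k:ℤ) + 1) = c * k + c := by ring
    push_cast
    rw [this, e_add, ih, pow_succ]

lemma e_pow_self (n : ℕ) (c : ℤ) : (e n c) ^ n = 1 := by
  rw [← e_mul_nat, mul_comm, e_nmul]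

lemma geom_sum_e {n : ℕ} (hn : n ≠ 0) (c : ℤ) :
    ∑ k ∈ Finset.range n, e n (c * k) = if (n : ℤ) ∣ c then (n : ℂ) else 0 := by
  split_ifs with h
  · have h1 : ∀ k ∈ Finset.range n, e n (c * k) = 1 := by
      intro k _
      rw [e_mul_nat, (e_eq_one_iff hn c).mpr h, one_pow]
    rw [Finset.sum_congr rfl h1]
    simp
  · have hz : e n c ≠ 1 := fun hh => h ((e_eq_one_iff hn c).mp hh)
    have : ∑ k ∈ Finset.range n, e n (c * k) = ∑ k ∈ Finset.range n, (e n c) ^ k := by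
      exact Finset.sum_congr rfl fun k _ => e_mul_nat n c k
    rw [this, geom_sum_eq hz, e_pow_self, sub_self, zero_div]

/-- scaling: e(2^j * t / 2^(j+s)) = e(t / 2^s) -/
lemma e_scale (j s : ℕ) (t : ℤ) : e (2 ^ (j + s)) ((2:ℤ) ^ j * t) = e (2 ^ s) t := by
  rw [e, e]
  congr 1
  have h1 : ((2:ℂ) ^ (j+s) : ℂ) ≠ 0 := pow_ne_zero _ two_ne_zero
  have h2 : ((2:ℂ) ^ s : ℂ) ≠ 0 := pow_ne_zero _ two_ne_zero
  push_cast
  rw [pow_add]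
  field_simp

lemma eZMod_intCast {n : ℕ} [NeZero n] (m : ℤ) : eZMod n ((m : ZMod n)) = e n m := by
  have h : (((m : ZMod n).val : ℤ)) ≡ m [ZMOD n] := by
    rw [Int.ModEq]
    rw [ZMod.val_intCast]
    simp [Int.emod_emod_of_dvd]
  have := e_congr h
  rw [← this]
  rw [eZMod, e]
  norm_cast

lemma sum_zmod_val {n : ℕ} [NeZero n] (f : ℕ → ℂ) :
    ∑ u : ZMod n, f u.val = ∑ k ∈ Finset.range n, f k := by
  obtain ⟨N, rfl⟩ : ∃ N, n = N + 1 := ⟨n - 1, (Nat.succ_pred_eq_of_pos (Nat.pos_of_ne_zero (NeZero.ne n))).symm⟩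
  rw [← Fin.sum_univ_eq_sum_range]
  rfl

lemma sum_zmod_shift {n : ℕ} [NeZero n] (f : ZMod n → ℂ) (c : ZMod n) :
    ∑ u : ZMod n, f u = ∑ u : ZMod n, f (u + c) := by
  exact (Fintype.sum_equiv (Equiv.addRight c) _ _ fun u => rfl).symm

lemma val_addc {n : ℕ} [NeZero n] (u : ZMod n) (c : ℤ) :
    (((u + (c : ZMod n)).val : ℤ)) ≡ (u.val : ℤ) + c [ZMOD n] := by
  have h1 : (u + (c : ZMod n)) = (((u.val : ℤ) + c : ℤ) : ZMod n) := by
    push_cast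
    simp [ZMod.natCast_val, ZMod.intCast_cast, ZMod.cast_id]
  rw [h1, Int.ModEq, ZMod.val_intCast]
  simp [Int.emod_emod_of_dvd]

lemma sum_range_mul_periodic (N : ℕ) (g : ℕ → ℂ) (hg : ∀ k, g (k + N) = g k) :
    ∀ M : ℕ, ∑ k ∈ Finset.range (M * N), g k = M * ∑ k ∈ Finset.range N, g k := by
  intro M
  induction M with
  | zero => simp
  | succ M ih =>
    have hsplit : ∑ k ∈ Finset.range ((M+1) * N), g k
        = ∑ k ∈ Finset.range (M * N), g k + ∑ k ∈ Finset.Ico (M*N) ((M+1)*N), g k := by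
      rw [Finset.range_eq_Ico, ← Finset.sum_Ico_consecutive g (Nat.zero_le (M*N))
        (Nat.mul_le_mul_right N (Nat.le_succ M)), ← Finset.range_eq_Ico]
    rw [hsplit, ih, Finset.sum_Ico_eq_sum_range]
    have h2 : (M+1)*N - M*N = N := by ring_nf; omega
    rw [h2]
    have h3 : ∀ k ∈ Finset.range N, g (M*N + k) = g k := by
      intro k _
      clear h2 hsplit ih
      induction M with
      | zero => simp
      | succ M ih2 =>
        have : (M+1)*N + k = (M*N + k) + N := by ring
        rw [this, hg, ih2]
    rw [Finset.sum_congr rfl h3]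
    push_cast
    ring

lemma sum_range_two_mul (M : ℕ) (g : ℕ → ℂ) :
    ∑ k ∈ Finset.range (2 * M), g k
      = ∑ w ∈ Finset.range M, g (2*w) + ∑ w ∈ Finset.range M, g (2*w+1) := by
  induction M with
  | zero => simp
  | succ M ih =>
    have : 2 * (M+1) = (2*M) + 1 + 1 := by ring
    rw [this, Finset.sum_range_succ, Finset.sum_range_succ, Finset.sum_range_succ,
      Finset.sum_range_succ, ih]
    ring

lemma sum_range_add_self (M : ℕ) (g : ℕ → ℂ) :
    ∑ k ∈ Finset.range (2 * M), g k
      = ∑ w ∈ Finset.range M, (g w + g (M + w)) := by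
  rw [two_mul, Finset.sum_range_add, Finset.sum_add_distrib]

lemma e_sub_dvd {n : ℕ} {m₁ m₂ : ℤ} (h : (n:ℤ) ∣ (m₁ - m₂)) : e n m₁ = e n m₂ :=
  e_congr (Int.ModEq.symm (Int.modEq_iff_dvd.mpr h))

lemma e_zero (n : ℕ) : e n 0 = 1 := by simp [e]

lemma I_eq_exp : Complex.exp (Real.pi * Complex.I / 2) = Complex.I := by
  have : (Real.pi : ℂ) * Complex.I / 2 = (Real.pi / 2 : ℝ) * Complex.I := by
    push_cast; ring
  rw [this, Complex.exp_mul_I]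
  simp [Complex.cos_ofReal_re, Real.cos_pi_div_two, Real.sin_pi_div_two]

lemma e_four (c : ℤ) : e 4 c = Complex.I ^ c := by
  rw [e]
  have h : 2 * (Real.pi:ℂ) * Complex.I * (c:ℂ) / ((4:ℕ):ℂ) = (c:ℂ) * ((Real.pi:ℂ) * Complex.I / 2) := by
    push_cast; ring
  rw [h, Complex.exp_int_mul, I_eq_exp]

lemma e_two_odd {c : ℤ} (h : Odd c) : e 2 c = -1 := by
  have h4 : e 4 (2 * c) = e 2 c := e_scale 1 1 c
  rw [← h4, e_four]
  obtain ⟨t, rfl⟩ := h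
  have : (2 : ℤ) * (2*t+1) = 4*t + 2 := by ring
  rw [this, zpow_add₀ Complex.I_ne_zero, zpow_mul]
  have h1 : (Complex.I)^(4:ℤ) = 1 := by
    rw [show (4:ℤ) = ((4:ℕ):ℤ) from rfl, zpow_natCast, Complex.I_pow_four]
  have h2 : (Complex.I)^(2:ℤ) = -1 := by
    rw [show (2:ℤ) = ((2:ℕ):ℤ) from rfl, zpow_natCast, Complex.I_sq]
  rw [h1, h2, one_zpow, one_mul]

noncomputable def Q (s : ℕ) (c : ℤ) : ℂ := ∑ k ∈ Finset.range (2^s), e (2^s) (c * (k:ℤ)^2)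

lemma Q_rec (t : ℕ) {c : ℤ} (hc : Odd c) : Q (t+4) c = 2 * Q (t+2) c := by
  set g : ℕ → ℂ := fun k => e (2^(t+4)) (c * (k:ℤ)^2) with hg
  have hper : ∀ k, g (k + 2^(t+3)) = g k := by
    intro k
    apply e_sub_dvd
    refine ⟨c*((k:ℤ) + 2^(t+2)), ?_⟩
    push_cast
    ring
  have h1 : Q (t+4) c = ∑ k ∈ Finset.range (2 * 2^(t+3)), g k := by
    rw [Q]
    apply Finset.sum_congr _ (fun x _ => rfl)
    congr 1
    ring
  have h1' : ∑ k ∈ Finset.range (2 * 2^(t+3)), g k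
      = 2 * ∑ k ∈ Finset.range (2^(t+3)), g k := by
    simpa using sum_range_mul_periodic (2^(t+3)) g hper 2
  have h2 : ∑ k ∈ Finset.range (2^(t+3)), g k
      = ∑ w ∈ Finset.range (2^(t+2)), g (2*w) + ∑ w ∈ Finset.range (2^(t+2)), g (2*w+1) := by
    rw [← sum_range_two_mul]
    apply Finset.sum_congr _ (fun x _ => rfl)
    congr 1
    ring
  have heven : ∀ w : ℕ, g (2*w) = e (2^(t+2)) (c * (w:ℤ)^2) := by
    intro w
    have hs := e_scale 2 (t+2) (c * (w:ℤ)^2)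
    rw [show 2 + (t+2) = t + 4 from by ring] at hs
    rw [← hs, hg]
    simp only []
    congr 1
    push_cast
    ring
  have hodd : ∀ w : ℕ, g (2*(2^(t+1) + w)+1) = - g (2*w+1) := by
    intro w
    have key : g (2*(2^(t+1) + w)+1)
        = e (2^(t+4)) (c * (2*(w:ℤ)+1)^2 + 2^(t+3) * (c * (2*(w:ℤ)+1))) := by
      apply e_sub_dvd
      refine ⟨c*2^t, ?_⟩
      push_cast
      ring
    rw [key, e_add]
    have hsc := e_scale (t+3) 1 (c * (2*(w:ℤ)+1))
    rw [show t+3+1 = t+4 from by ring] at hsc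
    have hoddm : Odd (c * (2*(w:ℤ)+1)) := hc.mul ⟨w, by ring⟩
    rw [hsc, pow_one, e_two_odd hoddm]
    have hgw : g (2*w+1) = e (2^(t+4)) (c * (2*(w:ℤ)+1)^2) := by
      rw [hg]
      simp only []
      congr 1
    rw [hgw]
    ring
  have hodd0 : ∑ w ∈ Finset.range (2^(t+2)), g (2*w+1) = 0 := by
    have hsplit : ∑ w ∈ Finset.range (2 * 2^(t+1)), g (2*w+1)
        = ∑ w ∈ Finset.range (2^(t+1)), (g (2*w+1) + g (2*(2^(t+1)+w)+1)) :=
      sum_range_add_self (2^(t+1)) (fun w => g (2*w+1))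
    have hr : ∑ w ∈ Finset.range (2^(t+2)), g (2*w+1)
        = ∑ w ∈ Finset.range (2 * 2^(t+1)), g (2*w+1) := by
      apply Finset.sum_congr _ (fun x _ => rfl)
      congr 1
      ring
    rw [hr, hsplit]
    calc ∑ w ∈ Finset.range (2^(t+1)), (g (2*w+1) + g (2*(2^(t+1)+w)+1))
        = ∑ w ∈ Finset.range (2^(t+1)), (0:ℂ) :=
          Finset.sum_congr rfl (fun w _ => by rw [hodd w]; ring)
      _ = 0 := by simp
  rw [h1, h1', h2, hodd0, add_zero, Q]
  congr 1
  exact Finset.sum_congr rfl fun w _ => heven w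

lemma e_four' (c : ℤ) : e 4 c = Complex.I ^ c := e_four c

lemma Q_two {c : ℤ} (hc : Odd c) : Q 2 c = 2 * (1 + Complex.I ^ c) := by
  rw [Q]
  norm_num [Finset.sum_range_succ]
  have h0 : e 4 0 = 1 := e_zero 4
  have h2 : e 4 (c * 4) = 1 := by
    rw [show c * (4:ℤ) = ((4:ℕ):ℤ) * c from by push_cast; ring, e_nmul]
  have h3 : e 4 (c * 9) = e 4 c :=
    e_sub_dvd ⟨2*c, by push_cast; ring⟩
  rw [h0, h2, h3, e_four]
  ring

lemma Q_three {c : ℤ} (hc : Odd c) : Q 3 c = 4 * e 8 c := by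
  rw [Q]
  norm_num [Finset.sum_range_succ]
  have h0 : e 8 0 = 1 := e_zero 8
  have h9 : e 8 (c * 9) = e 8 c := e_sub_dvd ⟨c, by push_cast; ring⟩
  have h16 : e 8 (c * 16) = 1 := by
    rw [show c * (16:ℤ) = ((8:ℕ):ℤ) * (2*c) from by push_cast; ring, e_nmul]
  have h25 : e 8 (c * 25) = e 8 c := e_sub_dvd ⟨3*c, by push_cast; ring⟩
  have h36 : e 8 (c * 36) = e 8 (c * 4) := e_sub_dvd ⟨4*c, by push_cast; ring⟩
  have h49 : e 8 (c * 49) = e 8 c := e_sub_dvd ⟨6*c, by push_cast; ring⟩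
  have h4 : e 8 (c * 4) = -1 := by
    have hs := e_scale 2 1 c
    norm_num at hs
    rw [show c * (4:ℤ) = 4 * c from by ring, hs, e_two_odd hc]
  rw [h0, h9, h16, h25, h36, h49, h4]
  ring

lemma I_zpow_emod8 (c : ℤ) : Complex.I ^ c = Complex.I ^ (c % 8) := by
  have h : c = 8 * (c / 8) + c % 8 := (Int.mul_ediv_add_emod c 8).symm
  have h8 : Complex.I ^ (8:ℤ) = 1 := by
    rw [show (8:ℤ) = ((8:ℕ):ℤ) from rfl, zpow_natCast,
      show (8:ℕ) = 4*2 from rfl, pow_mul, Complex.I_pow_four, one_pow]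
  calc Complex.I ^ c = Complex.I ^ (8 * (c/8) + c % 8) := by rw [← h]
    _ = (Complex.I ^ (8:ℤ)) ^ (c/8) * Complex.I ^ (c % 8) := by
        rw [zpow_add₀ Complex.I_ne_zero, zpow_mul]
    _ = Complex.I ^ (c % 8) := by rw [h8, one_zpow, one_mul]

lemma e_eight_emod (c : ℤ) : e 8 c = e 8 (c % 8) := by
  apply e_sub_dvd
  refine ⟨c / 8, ?_⟩
  push_cast
  omega

lemma zeta_val : e 8 1 = (Real.sqrt 2 / 2 : ℝ) * (1 + Complex.I) := by
  rw [e]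
  have h : 2*(Real.pi:ℂ)*Complex.I*((1:ℤ):ℂ)/((8:ℕ):ℂ) = ((Real.pi/4 : ℝ):ℂ) * Complex.I := by
    push_cast; ring
  rw [h, Complex.exp_mul_I, ← Complex.ofReal_cos, ← Complex.ofReal_sin,
    Real.cos_pi_div_four, Real.sin_pi_div_four]
  push_cast
  ring

lemma e_eight_pow (t : ℕ) : e 8 (t : ℤ) = (e 8 1) ^ t := by
  rw [← e_mul_nat]
  norm_num

lemma rpow_three_half : (2:ℝ) ^ ((3:ℝ)/2) = 2 * Real.sqrt 2 := by
  have h : (3:ℝ)/2 = 1 + 1/2 := by norm_num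
  rw [h, Real.rpow_add (by norm_num), Real.rpow_one, ← Real.sqrt_eq_rpow]

lemma zeta_sq : (e 8 1)^2 = Complex.I := by
  have hsq : ((Real.sqrt 2 : ℝ) : ℂ)^2 = 2 := by
    norm_cast
    rw [Real.sq_sqrt] <;> norm_num
  rw [zeta_val]
  push_cast
  have h : ((Real.sqrt 2:ℝ):ℂ)/2*(1+Complex.I) = ((Real.sqrt 2:ℝ):ℂ)/2*(1+Complex.I) := rfl
  calc (((Real.sqrt 2:ℝ):ℂ)/2*(1+Complex.I))^2
      = ((Real.sqrt 2:ℝ):ℂ)^2/4*(1+Complex.I)^2 := by ring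
    _ = Complex.I := by rw [hsq]; linear_combination (1/2 : ℂ) * Complex.I_sq

lemma Q_three_val {c : ℤ} (hc : Odd c) :
    Q 3 c = (((2:ℝ) ^ ((3:ℝ)/2) : ℝ) : ℂ) * ((ZMod.χ₈ (c : ZMod 8) : ℤ) : ℂ) ^ 3 *
      (1 + Complex.I ^ c) := by
  have hc2 : c % 2 = 1 := Int.odd_iff.mp hc
  have hmod : c % 8 = 1 ∨ c % 8 = 3 ∨ c % 8 = 5 ∨ c % 8 = 7 := by omega
  have hQ : Q 3 c = 4 * e 8 (c % 8) := by rw [Q_three hc, e_eight_emod]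
  have hI : Complex.I ^ c = Complex.I ^ (c % 8) := I_zpow_emod8 c
  have hchi : ZMod.χ₈ (c : ZMod 8) = ZMod.χ₈ ((c % 8 : ℤ) : ZMod 8) := by
    congr 1
    rw [ZMod.intCast_eq_intCast_iff]
    exact (Int.emod_emod_of_dvd c dvd_rfl).symm
  have hz := zeta_val
  have hz2 := zeta_sq
  rw [hQ, hI, hchi, rpow_three_half]
  rcases hmod with h | h | h | h <;> rw [h]
  · rw [show (1:ℤ) = ((1:ℕ):ℤ) from rfl, e_eight_pow, pow_one, hz,
      show ((ZMod.χ₈ ((((1:ℕ):ℤ) : ZMod 8)) : ℤ)) = 1 from by decide, zpow_natCast, pow_one]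
    push_cast
    ring
  · rw [show (3:ℤ) = ((3:ℕ):ℤ) from rfl, e_eight_pow, zpow_natCast,
      show ((ZMod.χ₈ ((((3:ℕ):ℤ) : ZMod 8)) : ℤ)) = -1 from by decide,
      show (e 8 1)^3 = Complex.I * e 8 1 from by rw [← hz2]; ring,
      show Complex.I^(3:ℕ) = -Complex.I from by simp [pow_succ, Complex.I_sq], hz]
    push_cast
    linear_combination 2*((Real.sqrt 2:ℝ):ℂ)*Complex.I_sq
  · rw [show (5:ℤ) = ((5:ℕ):ℤ) from rfl, e_eight_pow, zpow_natCast,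
      show ((ZMod.χ₈ ((((5:ℕ):ℤ) : ZMod 8)) : ℤ)) = -1 from by decide,
      show (e 8 1)^5 = Complex.I^2 * e 8 1 from by rw [← hz2]; ring,
      show Complex.I^(5:ℕ) = Complex.I from by simp [pow_succ, Complex.I_sq], hz,
      Complex.I_sq]
    push_cast
    ring
  · rw [show (7:ℤ) = ((7:ℕ):ℤ) from rfl, e_eight_pow, zpow_natCast,
      show ((ZMod.χ₈ ((((7:ℕ):ℤ) : ZMod 8)) : ℤ)) = 1 from by decide,
      show (e 8 1)^7 = Complex.I^2 * (Complex.I * e 8 1) from by rw [← hz2]; ring,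
      show Complex.I^(7:ℕ) = -Complex.I from by simp [pow_succ, Complex.I_sq], hz,
      Complex.I_sq]
    push_cast
    linear_combination -2*((Real.sqrt 2:ℝ):ℂ)*Complex.I_sq

lemma chi8_pm {c : ℤ} (hc : Odd c) :
    (ZMod.χ₈ (c : ZMod 8) : ℤ) = 1 ∨ (ZMod.χ₈ (c : ZMod 8) : ℤ) = -1 := by
  have hc2 : c % 2 = 1 := Int.odd_iff.mp hc
  rw [ZMod.χ₈_int_eq_if_mod_eight]
  split_ifs with h1 h2
  · omega
  · left; rfl
  · right; rfl

lemma chi8_sq_C {c : ℤ} (hc : Odd c) : ((ZMod.χ₈ (c : ZMod 8) : ℤ) : ℂ)^2 = 1 := by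
  rcases chi8_pm hc with h | h <;> rw [h] <;> norm_num

lemma Qval : ∀ s : ℕ, ∀ c : ℤ, Odd c →
    Q (s+2) c = (((2:ℝ) ^ ((((s:ℕ)+2:ℕ):ℝ)/2) : ℝ) : ℂ) *
      ((ZMod.χ₈ (c : ZMod 8) : ℤ) : ℂ) ^ (s+2) * (1 + Complex.I ^ c) := by
  intro s
  induction s using Nat.strong_induction_on with
  | _ s ih =>
    match s with
    | 0 =>
      intro c hc
      have h1 : (((0:ℕ)+2:ℕ):ℝ)/2 = 1 := by norm_num
      rw [Q_two hc, h1, Real.rpow_one, pow_two]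
      rcases chi8_pm hc with h | h <;> rw [h] <;> push_cast <;> ring
    | 1 =>
      intro c hc
      have h1 : (((1:ℕ)+2:ℕ):ℝ) = 3 := by norm_num
      rw [h1]
      exact Q_three_val hc
    | (m+2) =>
      intro c hc
      have hrec : Q (m+4) c = 2 * Q (m+2) c := Q_rec m hc
      have hih := ih m (by omega) c hc
      have hpow : (2:ℝ) ^ ((((m+2:ℕ)+2:ℕ):ℝ)/2) = 2 * (2:ℝ) ^ ((((m:ℕ)+2:ℕ):ℝ)/2) := by
        have h2 : ((((m+2:ℕ)+2:ℕ)):ℝ)/2 = 1 + (((m:ℕ)+2:ℕ):ℝ)/2 := by push_cast; ring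
        rw [h2, Real.rpow_add (by norm_num), Real.rpow_one]
      have hchi : ((ZMod.χ₈ (c : ZMod 8) : ℤ) : ℂ) ^ (m+2+2)
          = ((ZMod.χ₈ (c : ZMod 8) : ℤ) : ℂ) ^ (m+2) := by
        rw [show m+2+2 = (m+2)+2 from rfl, pow_add, chi8_sq_C hc, mul_one]
      rw [show m+2+2 = m+4 from by ring] at hchi ⊢
      rw [hrec, hih, hpow, hchi]
      push_cast
      ring

lemma sum_eZMod_eq_range (n : ℕ) [NeZero n] (x a : ℤ) :
    (∑ u : ZMod n, eZMod n ((x : ZMod n) * u^2 + 2*(a : ZMod n)*u))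
      = ∑ k ∈ Finset.range n, e n (x * (k:ℤ)^2 + 2*a*(k:ℤ)) := by
  rw [← sum_zmod_val (fun k => e n (x * (k:ℤ)^2 + 2*a*(k:ℤ)))]
  apply Finset.sum_congr rfl
  intro u _
  have h1 : (x : ZMod n) * u^2 + 2*(a : ZMod n)*u
      = ((x * ((u.val : ℤ))^2 + 2*a*((u.val:ℤ)) : ℤ) : ZMod n) := by
    push_cast
    simp [ZMod.natCast_val, ZMod.intCast_cast, ZMod.cast_id]
  rw [h1, eZMod_intCast]

lemma P_congr {n : ℕ} (x a : ℤ) {k₁ k₂ : ℤ} (h : k₁ ≡ k₂ [ZMOD n]) :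
    x * k₁^2 + 2*a*k₁ ≡ x * k₂^2 + 2*a*k₂ [ZMOD n] :=
  Int.ModEq.add (Int.ModEq.mul_left x (h.pow 2)) (Int.ModEq.mul_left (2*a) h)

lemma part1 (r' : ℕ) (x a : ℤ) (hx : (2:ℤ)^(r'+1) ∣ x) :
    ∑ k ∈ Finset.range (2^(r'+1)), e (2^(r'+1)) (x*(k:ℤ)^2+2*a*(k:ℤ))
      = if (2:ℤ)^r' ∣ a then ((2:ℂ))^(r'+1) else 0 := by
  have hn : (2:ℕ)^(r'+1) ≠ 0 := pow_ne_zero _ two_ne_zero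
  obtain ⟨y, rfl⟩ := hx
  have h1 : ∀ k ∈ Finset.range (2^(r'+1)),
      e (2^(r'+1)) ((2^(r'+1)*y)*(k:ℤ)^2+2*a*(k:ℤ)) = e (2^(r'+1)) ((2*a)*(k:ℤ)) := by
    intro k _
    apply e_sub_dvd
    refine ⟨y*(k:ℤ)^2, ?_⟩
    push_cast
    ring
  rw [Finset.sum_congr rfl h1, geom_sum_e hn (2*a)]
  have h2 : (((2:ℕ)^(r'+1) : ℕ) : ℤ) ∣ 2*a ↔ (2:ℤ)^r' ∣ a := by
    push_cast
    rw [pow_succ, mul_comm ((2:ℤ)^r') 2]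
    exact mul_dvd_mul_iff_left two_ne_zero
  rw [if_congr h2 rfl rfl]
  split_ifs
  · push_cast; ring
  · rfl

lemma parity_helper {x₀ : ℤ} (hodd : Odd x₀) (k : ℤ) : (2:ℤ) ∣ (x₀*k^2 - k) := by
  obtain ⟨y, rfl⟩ := hodd
  rcases Int.even_or_odd k with ⟨m, rfl⟩ | ⟨m, rfl⟩
  · exact ⟨(2*y+1)*2*m^2 - m, by ring⟩
  · exact ⟨4*y*m^2+4*y*m+y+2*m^2+m, by ring⟩

lemma part2 (r' : ℕ) (x₀ a : ℤ) (hodd : Odd x₀) :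
    ∑ k ∈ Finset.range (2^(r'+1)), e (2^(r'+1)) ((2^r'*x₀)*(k:ℤ)^2+2*a*(k:ℤ))
      = if (2:ℤ)^(r'+1) ∣ (2^r' + 2*a) then ((2:ℂ))^(r'+1) else 0 := by
  have hn : (2:ℕ)^(r'+1) ≠ 0 := pow_ne_zero _ two_ne_zero
  have h1 : ∀ k ∈ Finset.range (2^(r'+1)),
      e (2^(r'+1)) ((2^r'*x₀)*(k:ℤ)^2+2*a*(k:ℤ)) = e (2^(r'+1)) ((2^r' + 2*a)*(k:ℤ)) := by
    intro k _
    apply e_sub_dvd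
    obtain ⟨w, hw⟩ := parity_helper hodd (k:ℤ)
    refine ⟨w, ?_⟩
    have : (2:ℤ)^r'*x₀*(k:ℤ)^2+2*a*(k:ℤ) - (2^r' + 2*a)*(k:ℤ) = 2^r' * (x₀*(k:ℤ)^2 - (k:ℤ)) := by
      ring
    rw [this, hw]
    push_cast
    ring
  rw [Finset.sum_congr rfl h1, geom_sum_e hn (2^r' + 2*a)]
  have h2 : (((2:ℕ)^(r'+1) : ℕ) : ℤ) = (2:ℤ)^(r'+1) := by push_cast; ring
  rw [if_congr (by rw [h2]) rfl rfl]
  split_ifs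
  · push_cast; ring
  · rfl

lemma div_iff (r' : ℕ) (a : ℤ) :
    (2:ℤ)^(r'+1) ∣ (2^r' + 2*a) ↔ ((2:ℤ)^r' ∣ 2*a ∧ ¬ (2:ℤ)^(r'+1) ∣ 2*a) := by
  constructor
  · rintro ⟨t, ht⟩
    constructor
    · exact ⟨2*t - 1, by linear_combination ht⟩
    · rintro ⟨u, hu⟩
      have h1 : (2:ℤ)^r' * 1 = 2^r' * (2*t - 2*u) := by
        rw [pow_succ] at ht hu
        linear_combination ht - hu
      have h2 : (1:ℤ) = 2*t - 2*u := mul_left_cancel₀ (pow_ne_zero r' two_ne_zero) h1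
      omega
  · rintro ⟨⟨m, hm⟩, hnot⟩
    have hmodd : Odd m := by
      by_contra h
      rw [Int.not_odd_iff_even] at h
      obtain ⟨q, hq⟩ := h
      exact hnot ⟨q, by rw [pow_succ]; linear_combination hm + 2^r' * hq⟩
    obtain ⟨q, hq⟩ := hmodd
    exact ⟨q+1, by rw [pow_succ]; linear_combination hm + 2^r' * hq⟩

lemma sum_eZMod_eq_zmod (n : ℕ) [NeZero n] (x a : ℤ) :
    (∑ u : ZMod n, eZMod n ((x : ZMod n) * u^2 + 2*(a : ZMod n)*u))
      = ∑ u : ZMod n, e n (x * ((u.val:ℤ))^2 + 2*a*((u.val:ℤ))) := by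
  apply Finset.sum_congr rfl
  intro u _
  have h1 : (x : ZMod n) * u^2 + 2*(a : ZMod n)*u
      = ((x * ((u.val : ℤ))^2 + 2*a*((u.val:ℤ)) : ℤ) : ZMod n) := by
    push_cast
    simp [ZMod.natCast_val, ZMod.intCast_cast, ZMod.cast_id]
  rw [h1, eZMod_intCast]

lemma part3a (j t m : ℕ) (hm : m = j+2+t) (x₀ a : ℤ) (ha : ¬ (2:ℤ)^j ∣ a) :
    ∑ u : ZMod (2^m), e (2^m) ((2^j*x₀) * ((u.val:ℤ))^2 + 2*a*((u.val:ℤ))) = 0 := by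
  subst hm
  haveI : NeZero ((2:ℕ)^(j+2+t)) := ⟨pow_ne_zero _ two_ne_zero⟩
  set n : ℕ := 2^(j+2+t) with hn
  set f : ZMod n → ℂ := fun u => e n ((2^j*x₀) * ((u.val:ℤ))^2 + 2*a*((u.val:ℤ))) with hf
  set c : ZMod n := (((2:ℤ)^(t+1) : ℤ) : ZMod n) with hc
  have key : ∀ u : ZMod n, f (u + c) = e (2^j) a * f u := by
    intro u
    have hcong : (((u+c).val : ℤ)) ≡ ((u.val:ℤ) + 2^(t+1)) [ZMOD n] := val_addc u ((2:ℤ)^(t+1))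
    have h1 : f (u + c) = e n ((2^j*x₀) * ((u.val:ℤ) + 2^(t+1))^2 + 2*a*((u.val:ℤ) + 2^(t+1))) := by
      rw [hf]
      exact e_congr (P_congr (2^j*x₀) a hcong)
    have h2 : e n ((2^j*x₀) * ((u.val:ℤ) + 2^(t+1))^2 + 2*a*((u.val:ℤ) + 2^(t+1)))
        = e n (((2^j*x₀) * ((u.val:ℤ))^2 + 2*a*((u.val:ℤ))) + 2^(t+2)*a) := by
      apply e_sub_dvd
      refine ⟨x₀*(u.val:ℤ) + x₀*2^t, ?_⟩
      push_cast [hn]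
      ring
    have h3 : e n (((2^j*x₀) * ((u.val:ℤ))^2 + 2*a*((u.val:ℤ))) + 2^(t+2)*a)
        = f u * e n (2^(t+2)*a) := by
      rw [e_add, hf]
    have h4 : e n ((2:ℤ)^(t+2)*a) = e (2^j) a := by
      have := e_scale (t+2) j a
      rw [show (t+2)+j = j+2+t from by ring] at this
      rw [hn, this]
    rw [h1, h2, h3, h4]
    ring
  have hshift : ∑ u : ZMod n, f u = ∑ u : ZMod n, f (u + c) := sum_zmod_shift f c
  have hS : ∑ u : ZMod n, f u = e (2^j) a * ∑ u : ZMod n, f u := by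
    conv_lhs => rw [hshift]
    rw [Finset.sum_congr rfl (fun u _ => key u), ← Finset.mul_sum]
  have hz : e (2^j) a ≠ 1 := by
    intro h
    apply ha
    have := (e_eq_one_iff (pow_ne_zero j two_ne_zero) a).mp h
    push_cast at this
    exact this
  have hfac : (e (2^j) a - 1) * ∑ u : ZMod n, f u = 0 := by linear_combination -hS
  rcases mul_eq_zero.mp hfac with h | h
  · exact absurd (by linear_combination h : e (2^j) a = 1) hz
  · exact h

lemma part3b (j t m : ℕ) (hm : m = j+2+t) (x₀ a' xinv : ℤ) (hodd : Odd x₀)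
    (hinv : x₀ * xinv ≡ 1 [ZMOD (2:ℤ)^(t+2)]) :
    ∑ k ∈ Finset.range (2^m), e (2^m) ((2^j*x₀)*(k:ℤ)^2 + 2*(2^j*a')*(k:ℤ))
      = ((2:ℂ)^j) * e (2^(t+2)) (-(a'^2*xinv)) * Q (t+2) x₀ := by
  subst hm
  haveI : NeZero ((2:ℕ)^(t+2)) := ⟨pow_ne_zero _ two_ne_zero⟩
  -- step 1 : rewrite summand
  have h1 : ∀ k ∈ Finset.range (2^(j+2+t)),
      e (2^(j+2+t)) ((2^j*x₀)*(k:ℤ)^2 + 2*(2^j*a')*(k:ℤ))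
        = e (2^(t+2)) (x₀*(k:ℤ)^2 + 2*a'*(k:ℤ)) := by
    intro k _
    have hs := e_scale j (t+2) (x₀*(k:ℤ)^2 + 2*a'*(k:ℤ))
    rw [show j+(t+2) = j+2+t from by ring] at hs
    rw [← hs]
    congr 1
    ring
  rw [Finset.sum_congr rfl h1]
  -- step 2 : fold by periodicity
  have hper : ∀ k : ℕ, e (2^(t+2)) (x₀*((k + 2^(t+2) : ℕ):ℤ)^2 + 2*a'*((k + 2^(t+2) : ℕ):ℤ))
      = e (2^(t+2)) (x₀*(k:ℤ)^2 + 2*a'*(k:ℤ)) := by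
    intro k
    apply e_sub_dvd
    refine ⟨2*x₀*(k:ℤ) + x₀*2^(t+2) + 2*a', ?_⟩
    push_cast
    ring
  have hfold : ∑ k ∈ Finset.range (2^j * 2^(t+2)), e (2^(t+2)) (x₀*(k:ℤ)^2 + 2*a'*(k:ℤ))
      = (2^j : ℂ) * ∑ k ∈ Finset.range (2^(t+2)), e (2^(t+2)) (x₀*(k:ℤ)^2 + 2*a'*(k:ℤ)) := by
    have := sum_range_mul_periodic (2^(t+2))
      (fun k : ℕ => e (2^(t+2)) (x₀*(k:ℤ)^2 + 2*a'*(k:ℤ))) hper (2^j)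
    simpa using this
  have hrange : (2:ℕ)^(j+2+t) = 2^j * 2^(t+2) := by
    rw [← pow_add]
    congr 1
    omega
  rw [show ∑ k ∈ Finset.range (2^(j+2+t)), e (2^(t+2)) (x₀*(k:ℤ)^2 + 2*a'*(k:ℤ))
      = ∑ k ∈ Finset.range (2^j * 2^(t+2)), e (2^(t+2)) (x₀*(k:ℤ)^2 + 2*a'*(k:ℤ))
      from by rw [hrange], hfold]
  -- step 3 : back to ZMod for the shift
  have hzm : ∑ k ∈ Finset.range (2^(t+2)), e (2^(t+2)) (x₀*(k:ℤ)^2 + 2*a'*(k:ℤ))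
      = ∑ u : ZMod (2^(t+2)), e (2^(t+2)) (x₀*((u.val:ℤ))^2 + 2*a'*((u.val:ℤ))) :=
    (sum_zmod_val (fun k => e (2^(t+2)) (x₀*(k:ℤ)^2 + 2*a'*(k:ℤ)))).symm
  rw [hzm]
  -- step 4 : complete the square via shift by -(a'*xinv)
  set c : ZMod (2^(t+2)) := ((-(a'*xinv) : ℤ) : ZMod (2^(t+2))) with hc
  obtain ⟨w, hw⟩ : ((2:ℤ)^(t+2)) ∣ (1 - x₀*xinv) := Int.ModEq.dvd hinv
  have key : ∀ u : ZMod (2^(t+2)),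
      e (2^(t+2)) (x₀*(((u+c).val:ℤ))^2 + 2*a'*(((u+c).val:ℤ)))
      = e (2^(t+2)) (-(a'^2*xinv)) * e (2^(t+2)) (x₀*((u.val:ℤ))^2) := by
    intro u
    have hcong := val_addc u (-(a'*xinv))
    have h2 : e (2^(t+2)) (x₀*(((u+c).val:ℤ))^2 + 2*a'*(((u+c).val:ℤ)))
        = e (2^(t+2)) (x₀*((u.val:ℤ) + -(a'*xinv))^2 + 2*a'*((u.val:ℤ) + -(a'*xinv))) :=
      e_congr (P_congr x₀ a' hcong)
    have h3 : e (2^(t+2)) (x₀*((u.val:ℤ) + -(a'*xinv))^2 + 2*a'*((u.val:ℤ) + -(a'*xinv)))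
        = e (2^(t+2)) (-(a'^2*xinv) + x₀*((u.val:ℤ))^2) := by
      apply e_sub_dvd
      refine ⟨w*(2*(u.val:ℤ)*a' - a'^2*xinv), ?_⟩
      push_cast
      linear_combination (2*(u.val:ℤ)*a' - a'^2*xinv) * hw
    rw [h2, h3, e_add]
  have hshift : ∑ u : ZMod (2^(t+2)), e (2^(t+2)) (x₀*((u.val:ℤ))^2 + 2*a'*((u.val:ℤ)))
      = ∑ u : ZMod (2^(t+2)), e (2^(t+2)) (x₀*(((u+c).val:ℤ))^2 + 2*a'*(((u+c).val:ℤ))) :=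
    sum_zmod_shift (fun u => e (2^(t+2)) (x₀*((u.val:ℤ))^2 + 2*a'*((u.val:ℤ)))) c
  rw [hshift, Finset.sum_congr rfl (fun u _ => key u), ← Finset.mul_sum]
  have hQ : ∑ u : ZMod (2^(t+2)), e (2^(t+2)) (x₀*((u.val:ℤ))^2) = Q (t+2) x₀ := by
    rw [Q, ← sum_zmod_val (fun k => e (2^(t+2)) (x₀*(k:ℤ)^2))]
  rw [hQ]
  ring


theorem gauss_sum_two (r : ℕ) (hr : 1 ≤ r) (x a : ℤ)
    (G : ℂ)
    (hG : G = ∑ u : ZMod (2 ^ r),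
      eZMod (2 ^ r) ((x : ZMod (2 ^ r)) * u ^ 2 + 2 * (a : ZMod (2 ^ r)) * u)) :
    ((2 : ℤ) ^ r ∣ x →
      (((2 : ℤ) ^ (r - 1) ∣ a → G = (2 : ℂ) ^ r) ∧
        (¬ (2 : ℤ) ^ (r - 1) ∣ a → G = 0))) ∧
    (((2 : ℤ) ^ (r - 1) ∣ x ∧ ¬ (2 : ℤ) ^ r ∣ x) →
      ((((2 : ℤ) ^ (r - 1) ∣ 2 * a ∧ ¬ (2 : ℤ) ^ r ∣ 2 * a) → G = (2 : ℂ) ^ r) ∧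
        (¬ ((2 : ℤ) ^ (r - 1) ∣ 2 * a ∧ ¬ (2 : ℤ) ^ r ∣ 2 * a) → G = 0))) ∧
    (∀ j : ℕ, j + 2 ≤ r → ∀ x₀ : ℤ, Odd x₀ → x = 2 ^ j * x₀ →
      ((¬ (2 : ℤ) ^ j ∣ a → G = 0) ∧
        (∀ a' xinv : ℤ, a = 2 ^ j * a' →
          Int.ModEq ((2 : ℤ) ^ (r - j)) (x₀ * xinv) 1 →
          G = (((2 : ℝ) ^ (((r : ℝ) + (j : ℝ)) / 2) : ℝ) : ℂ) *
            Complex.exp (-(2 * Real.pi * Complex.I) * ((a' : ℂ) ^ 2 * (xinv : ℂ)) /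
              (2 : ℂ) ^ (r - j)) *
            ((ZMod.χ₈ (x₀ : ZMod 8) : ℤ) : ℂ) ^ (r - j) *
            (1 + Complex.I ^ x₀)))) := by
  obtain ⟨r', rfl⟩ : ∃ r', r = r' + 1 := ⟨r - 1, by omega⟩
  haveI : NeZero ((2:ℕ)^(r'+1)) := ⟨pow_ne_zero _ two_ne_zero⟩
  simp only [Nat.add_sub_cancel]
  have hGr : G = ∑ k ∈ Finset.range (2^(r'+1)), e (2^(r'+1)) (x*(k:ℤ)^2+2*a*(k:ℤ)) :=
    hG.trans (sum_eZMod_eq_range (2^(r'+1)) x a)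
  have hGz : G = ∑ u : ZMod (2^(r'+1)),
      e (2^(r'+1)) (x*((u.val:ℤ))^2+2*a*((u.val:ℤ))) :=
    hG.trans (sum_eZMod_eq_zmod (2^(r'+1)) x a)
  refine ⟨?_, ?_, ?_⟩
  · -- part 1
    intro hx
    rw [hGr, part1 r' x a hx]
    constructor
    · intro ha
      rw [if_pos ha]
    · intro ha
      rw [if_neg ha]
  · -- part 2
    rintro ⟨h1, h2⟩
    obtain ⟨x₀, rfl⟩ := h1
    have hodd : Odd x₀ := by
      rw [← Int.not_even_iff_odd]
      intro hev
      obtain ⟨m, hm⟩ := hev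
      exact h2 ⟨m, by rw [pow_succ]; linear_combination 2^r' * hm⟩
    rw [hGr, part2 r' x₀ a hodd]
    constructor
    · intro hcond
      rw [if_pos ((div_iff r' a).mpr hcond)]
    · intro hncond
      rw [if_neg (fun h => hncond ((div_iff r' a).mp h))]
  · -- part 3
    intro j hj x₀ hodd hxeq
    obtain ⟨t, hjt⟩ : ∃ t, r' + 1 = j + 2 + t := ⟨r' + 1 - (j + 2), by omega⟩
    have hrj : r' + 1 - j = t + 2 := by omega
    constructor
    · -- 3a
      intro ha
      rw [hGz, hxeq]
      exact part3a j t (r'+1) hjt x₀ a ha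
    · -- 3b
      intro a' xinv ha' hxinv
      rw [hrj] at hxinv ⊢
      rw [hGr, hxeq, ha']
      rw [show r' + 1 = j + 2 + t from hjt]
      rw [part3b j t (j+2+t) rfl x₀ a' xinv hodd hxinv]
      have hq := Qval t x₀ hodd
      rw [hq]
      have hexp : e (2^(t+2)) (-(a'^2*xinv))
          = Complex.exp (-(2 * Real.pi * Complex.I) * ((a' : ℂ) ^ 2 * (xinv : ℂ)) /
              (2 : ℂ) ^ (t+2)) := by
        rw [e]
        congr 1
        push_cast
        ring
      rw [hexp]
      have hB : (2:ℝ) ^ ((((j+2+t:ℕ):ℝ) + ((j:ℕ):ℝ))/2)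
          = (2:ℝ) ^ ((((t:ℕ)+2:ℕ):ℝ)/2) * 2^(j:ℕ) := by
        rw [← Real.rpow_natCast 2 j, ← Real.rpow_add (by norm_num)]
        congr 1
        push_cast
        ring
      rw [hB]
      push_cast
      ring

end GaussAux
end

section
/- Let T ≥ 2 be an even integer and m a positive integer. Then Σ_{x ∈ ℤ/2^Tℤ, x odd} exp(−2πi x m/2^T)(1 + i^x) equals: 2^{T−1} if 2^T ∣ m; −2^{T−1} if v_2(m) = T−1; 2^{T−1}·(−1)^{(m₁−1)/2} if v_2(m) = T−2, where m₁ = m/2^{T−2}; and 0 if v_2(m) < T−2. (The summand is well defined since x mod 2^T determines x mod 4; this is the value of Σ_{x ∈ ℤ/2^Tℤ} exp(−2πi x m/2^T)(2/x)^T(1 + i^x) for even T, because (2/x)^T = 1 for odd x and 0 for even x.) -/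
open scoped BigOperators

private lemma geom_root (z : ℂ) (N : ℕ) (hN : z ^ N = 1) (hz : z ≠ 1) :
    ∑ j ∈ Finset.range N, z ^ j = 0 := by
  rw [geom_sum_eq hz, hN, sub_self, zero_div]

private lemma exp_div_eq_one_iff (m d : ℕ) (hd : 0 < d) :
    Complex.exp (-(2 * Real.pi * Complex.I) * m / d) = 1 ↔ d ∣ m := by
  have hd' : (d : ℂ) ≠ 0 := Nat.cast_ne_zero.mpr hd.ne'
  have h2 : (2 * (Real.pi : ℂ) * Complex.I) ≠ 0 := by
    simp [Real.pi_ne_zero, Complex.I_ne_zero]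
  rw [Complex.exp_eq_one_iff]
  constructor
  · rintro ⟨n, hn⟩
    rw [div_eq_iff hd'] at hn
    have hm' : (-(m : ℂ)) = n * d := by
      apply mul_left_cancel₀ h2
      linear_combination hn
    have hZ : ((m : ℤ) : ℂ) = (((-n) * d : ℤ) : ℂ) := by
      push_cast
      linear_combination -hm'
    have : (m : ℤ) = d * -n := by have := Int.cast_injective hZ; linarith
    exact Int.ofNat_dvd.mp ⟨-n, by exact_mod_cast this⟩
  · rintro ⟨k, rfl⟩
    refine ⟨-k, ?_⟩
    push_cast
    field_simp

private lemma sum_odd_reindex (t : ℕ) (f : ℕ → ℂ) :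
    ∑ x ∈ Finset.univ.filter (fun x : ZMod (2 ^ (t + 2)) => x.val % 2 = 1), f x.val
      = ∑ j ∈ Finset.range (2 ^ (t + 1)), f (2 * j + 1) := by
  haveI : NeZero (2 ^ (t + 2)) := ⟨by positivity⟩
  have hpow : 2 ^ (t + 2) = 2 * 2 ^ (t + 1) := by ring
  symm
  refine Finset.sum_nbij' (i := fun j => ((2 * j + 1 : ℕ) : ZMod (2 ^ (t + 2))))
    (j := fun x => x.val / 2) ?_ ?_ ?_ ?_ ?_
  · intro j hj
    have hj' : j < 2 ^ (t + 1) := Finset.mem_range.mp hj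
    have hlt : 2 * j + 1 < 2 ^ (t + 2) := by omega
    simp only [Finset.mem_filter, Finset.mem_univ, true_and, ZMod.val_natCast_of_lt hlt]
    omega
  · intro x hx
    have := ZMod.val_lt x
    apply Finset.mem_range.mpr
    omega
  · intro j hj
    have hj' : j < 2 ^ (t + 1) := Finset.mem_range.mp hj
    have hlt : 2 * j + 1 < 2 ^ (t + 2) := by omega
    rw [ZMod.val_natCast_of_lt hlt]
    omega
  · intro x hx
    have hodd : x.val % 2 = 1 := (Finset.mem_filter.mp hx).2
    have h5 : 2 * (x.val / 2) + 1 = x.val := by omega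
    rw [h5]
    exact ZMod.natCast_rightInverse x
  · intro j hj
    have hj' : j < 2 ^ (t + 1) := Finset.mem_range.mp hj
    have hlt : 2 * j + 1 < 2 ^ (t + 2) := by omega
    rw [ZMod.val_natCast_of_lt hlt]

theorem sum_odd_x_exp_one_add_I_pow (T : ℕ) (hT : 2 ≤ T) (hTeven : Even T)
    (m : ℕ) (hm : 0 < m)
    (S : ℂ)
    (hS : S = ∑ x ∈ Finset.univ.filter (fun x : ZMod (2 ^ T) => x.val % 2 = 1),
      Complex.exp (-(2 * Real.pi * Complex.I) * (x.val : ℂ) * (m : ℂ) / (2 : ℂ) ^ T) *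
        (1 + Complex.I ^ x.val)) :
    (2 ^ T ∣ m → S = (2 : ℂ) ^ (T - 1)) ∧
    (padicValNat 2 m = T - 1 → S = -(2 : ℂ) ^ (T - 1)) ∧
    (padicValNat 2 m = T - 2 →
      S = (2 : ℂ) ^ (T - 1) * (-1 : ℂ) ^ ((m / 2 ^ (T - 2) - 1) / 2)) ∧
    (padicValNat 2 m < T - 2 → S = 0) := by
  obtain ⟨t, rfl⟩ : ∃ t, T = t + 2 := ⟨T - 2, by omega⟩
  clear hT hTeven
  have hmne : m ≠ 0 := hm.ne'
  haveI : Fact (Nat.Prime 2) := ⟨Nat.prime_two⟩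
  have hT1 : t + 2 - 1 = t + 1 := rfl
  have hT2 : t + 2 - 2 = t := rfl
  set N := 2 ^ (t + 1) with hNdef
  have hNe : ((2:ℂ) ^ (t + 2)) ≠ 0 := pow_ne_zero _ two_ne_zero
  have hNe1 : ((2:ℂ) ^ (t + 1)) ≠ 0 := pow_ne_zero _ two_ne_zero
  have hNe0 : ((2:ℂ) ^ t) ≠ 0 := pow_ne_zero _ two_ne_zero
  set ω : ℂ := Complex.exp (-(2 * Real.pi * Complex.I) * m / (2:ℂ) ^ (t + 2)) with hω
  -- step 1: reindex the sum
  have h1 : S = ∑ j ∈ Finset.range N, Complex.exp (-(2 * Real.pi * Complex.I) *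
      ((2 * j + 1 : ℕ) : ℂ) * (m : ℂ) / (2 : ℂ) ^ (t + 2)) * (1 + Complex.I ^ (2 * j + 1)) := by
    rw [hS]
    exact sum_odd_reindex t (fun n => Complex.exp (-(2 * Real.pi * Complex.I) * (n : ℂ) *
      (m : ℂ) / (2 : ℂ) ^ (t + 2)) * (1 + Complex.I ^ n))
  -- step 2: pointwise rewrite
  have h2 : ∀ j : ℕ, Complex.exp (-(2 * Real.pi * Complex.I) * ((2 * j + 1 : ℕ) : ℂ) *
      (m : ℂ) / (2 : ℂ) ^ (t + 2)) * (1 + Complex.I ^ (2 * j + 1))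
      = ω * (ω ^ 2) ^ j + (Complex.I * ω) * (-(ω ^ 2)) ^ j := by
    intro j
    have he : Complex.exp (-(2 * Real.pi * Complex.I) * ((2 * j + 1 : ℕ) : ℂ) *
        (m : ℂ) / (2 : ℂ) ^ (t + 2)) = ω ^ (2 * j + 1) := by
      rw [hω, ← Complex.exp_nat_mul]
      congr 1
      push_cast
      field_simp
    have hI : Complex.I ^ (2 * j + 1) = (-1 : ℂ) ^ j * Complex.I := by
      rw [pow_succ, pow_mul, Complex.I_sq]
    have hω21 : ω ^ (2 * j + 1) = ω * (ω ^ 2) ^ j := by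
      rw [pow_succ, pow_mul]; ring
    rw [he, hI, hω21, show -(ω ^ 2) = (-1 : ℂ) * ω ^ 2 from by ring, mul_pow]
    ring
  have hS2 : S = ω * (∑ j ∈ Finset.range N, (ω ^ 2) ^ j)
      + Complex.I * ω * (∑ j ∈ Finset.range N, (-(ω ^ 2)) ^ j) := by
    rw [h1, Finset.sum_congr rfl (fun j _ => h2 j), Finset.sum_add_distrib,
      ← Finset.mul_sum, ← Finset.mul_sum]
  -- roots of unity facts
  have hωN : ω ^ (2 ^ (t + 2)) = 1 := by
    rw [hω, ← Complex.exp_nat_mul]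
    have harg : ((2 ^ (t + 2) : ℕ) : ℂ) * (-(2 * Real.pi * Complex.I) * m / (2:ℂ) ^ (t + 2))
        = (Int.cast (-(m : ℤ)) : ℂ) * (2 * Real.pi * Complex.I) := by
      push_cast
      field_simp
    rw [harg, Complex.exp_int_mul_two_pi_mul_I]
  have hω2N : (ω ^ 2) ^ N = 1 := by
    rw [← pow_mul, show 2 * N = 2 ^ (t + 2) from by rw [hNdef]; ring, hωN]
  have hNeven : Even N := ⟨2 ^ t, by rw [hNdef]; ring⟩
  have hnegN : (-(ω ^ 2)) ^ N = 1 := by rw [hNeven.neg_pow, hω2N]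
  have hω2 : ω ^ 2 = Complex.exp (-(2 * Real.pi * Complex.I) * m / ((2 ^ (t + 1) : ℕ) : ℂ)) := by
    rw [hω, sq, ← Complex.exp_add]
    congr 1
    push_cast
    field_simp
    ring
  have hω4 : (ω ^ 2) ^ 2 = Complex.exp (-(2 * Real.pi * Complex.I) * m / ((2 ^ t : ℕ) : ℂ)) := by
    rw [hω2, sq, ← Complex.exp_add]
    congr 1
    push_cast
    field_simp
    ring
  have hωalt : ω = Complex.exp (-(2 * Real.pi * Complex.I) * m / ((2 ^ (t + 2) : ℕ) : ℂ)) := by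
    rw [hω]; norm_cast
  have e1 : ω = 1 ↔ 2 ^ (t + 2) ∣ m := by
    rw [hωalt]; exact exp_div_eq_one_iff m _ (by positivity)
  have e2 : ω ^ 2 = 1 ↔ 2 ^ (t + 1) ∣ m := by
    rw [hω2]; exact exp_div_eq_one_iff m _ (by positivity)
  have e4 : (ω ^ 2) ^ 2 = 1 ↔ 2 ^ t ∣ m := by
    rw [hω4]; exact exp_div_eq_one_iff m _ (by positivity)
  -- geometric sum values
  have hGone : ∑ j ∈ Finset.range N, (1 : ℂ) ^ j = (N : ℂ) := by simp
  refine ⟨?_, ?_, ?_, ?_⟩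
  -- Case A : 2^T ∣ m
  · intro h
    have hω1 : ω = 1 := e1.mpr h
    have hsq : ω ^ 2 = 1 := by rw [hω1]; ring
    have hG1 : ∑ j ∈ Finset.range N, (ω ^ 2) ^ j = (N : ℂ) := by rw [hsq]; exact hGone
    have hG2 : ∑ j ∈ Finset.range N, (-(ω ^ 2)) ^ j = 0 := by
      apply geom_root _ _ hnegN
      rw [hsq]; norm_num
    rw [hS2, hG1, hG2, hω1, hT1, hNdef]
    push_cast
    ring
  -- Case B : v₂(m) = T - 1
  · intro hv0
    have hv : padicValNat 2 m = t + 1 := by omega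
    obtain ⟨q, hq⟩ : 2 ^ (t + 1) ∣ m := hv ▸ pow_padicValNat_dvd
    have hqodd : q % 2 = 1 := by
      by_contra hcon
      have h2q : 2 ∣ q := by omega
      obtain ⟨r, hr⟩ := h2q
      have hdvd : 2 ^ (t + 2) ∣ m := ⟨r, by rw [hq, hr]; ring⟩
      have := (padicValNat_dvd_iff_le hmne).mp hdvd
      omega
    have hωval : ω = -1 := by
      rw [hω, hq]
      have harg : -(2 * Real.pi * Complex.I) * ((2 ^ (t + 1) * q : ℕ) : ℂ) / (2:ℂ) ^ (t + 2)
          = ((q : ℕ) : ℂ) * -(Real.pi * Complex.I) := by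
        push_cast
        rw [show ((2:ℂ)) ^ (t + 2) = 2 * 2 ^ (t + 1) from by ring]
        field_simp
      rw [harg, Complex.exp_nat_mul, Complex.exp_neg, Complex.exp_pi_mul_I]
      rw [show ((-1 : ℂ))⁻¹ = -1 from by norm_num]
      exact Odd.neg_one_pow (Nat.odd_iff.mpr hqodd)
    have hsq : ω ^ 2 = 1 := by rw [hωval]; ring
    have hG1 : ∑ j ∈ Finset.range N, (ω ^ 2) ^ j = (N : ℂ) := by rw [hsq]; exact hGone
    have hG2 : ∑ j ∈ Finset.range N, (-(ω ^ 2)) ^ j = 0 := by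
      apply geom_root _ _ hnegN
      rw [hsq]; norm_num
    rw [hS2, hG1, hG2, hωval, hT1, hNdef]
    push_cast
    ring
  -- Case C : v₂(m) = T - 2
  · intro hv0
    have hv : padicValNat 2 m = t := by omega
    obtain ⟨q, hq⟩ : 2 ^ t ∣ m := hv ▸ pow_padicValNat_dvd
    have hqodd : q % 2 = 1 := by
      by_contra hcon
      have h2q : 2 ∣ q := by omega
      obtain ⟨r, hr⟩ := h2q
      have hdvd : 2 ^ (t + 1) ∣ m := ⟨r, by rw [hq, hr]; ring⟩
      have := (padicValNat_dvd_iff_le hmne).mp hdvd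
      omega
    set k := q / 2 with hk
    have hq2 : q = 2 * k + 1 := by omega
    have hexpI : Complex.exp (-(Real.pi * Complex.I / 2)) = -Complex.I := by
      rw [show -(Real.pi * Complex.I / 2) = ((-(Real.pi / 2) : ℝ) : ℂ) * Complex.I from by
        push_cast; ring, Complex.exp_mul_I, ← Complex.ofReal_cos, ← Complex.ofReal_sin]
      simp [Real.cos_pi_div_two, Real.sin_pi_div_two]
    have hωval : ω = (-1 : ℂ) ^ k * -Complex.I := by
      rw [hω, hq, hq2]
      have harg : -(2 * Real.pi * Complex.I) * ((2 ^ t * (2 * k + 1) : ℕ) : ℂ) / (2:ℂ) ^ (t + 2)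
          = ((2 * k + 1 : ℕ) : ℂ) * -(Real.pi * Complex.I / 2) := by
        push_cast
        rw [show ((2:ℂ)) ^ (t + 2) = 4 * 2 ^ t from by ring]
        field_simp
        ring
      rw [harg, Complex.exp_nat_mul, hexpI, pow_succ, pow_mul, neg_sq, Complex.I_sq]
    have hsgn : ((-1 : ℂ) ^ k) ^ 2 = 1 := by
      rw [← pow_mul, mul_comm k 2, pow_mul]
      norm_num
    have hω2val : ω ^ 2 = -1 := by
      rw [hωval, mul_pow, hsgn, one_mul, neg_sq, Complex.I_sq]
    have hG1 : ∑ j ∈ Finset.range N, (ω ^ 2) ^ j = 0 := by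
      apply geom_root _ _ hω2N
      rw [hω2val]
      norm_num
    have hneg1 : -(ω ^ 2) = 1 := by rw [hω2val]; ring
    have hG2 : ∑ j ∈ Finset.range N, (-(ω ^ 2)) ^ j = (N : ℂ) := by rw [hneg1]; exact hGone
    have hidx : (m / 2 ^ (t + 2 - 2) - 1) / 2 = k := by
      rw [hT2, hq, Nat.mul_div_cancel_left _ (Nat.pow_pos (by norm_num))]
      omega
    have hII : Complex.I * -Complex.I = 1 := by simp [Complex.I_mul_I]
    rw [hS2, hG1, hG2, hωval, hidx, hT1, hNdef]
    push_cast
    linear_combination ((-1:ℂ)) ^ k * (2:ℂ) ^ (t + 1) * hII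
  -- Case D : v₂(m) < T - 2
  · intro hv0
    have hv : padicValNat 2 m < t := by omega
    have hd1 : ¬ 2 ^ (t + 1) ∣ m := by
      intro h
      have := (padicValNat_dvd_iff_le hmne).mp h
      omega
    have hd0 : ¬ 2 ^ t ∣ m := by
      intro h
      have := (padicValNat_dvd_iff_le hmne).mp h
      omega
    have hne1 : ω ^ 2 ≠ 1 := fun h => hd1 (e2.mp h)
    have hne2 : -(ω ^ 2) ≠ 1 := by
      intro h
      apply hd0
      apply e4.mp
      have h' : ω ^ 2 = -1 := by linear_combination -h
      rw [h']
      ring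
    rw [hS2, geom_root _ _ hω2N hne1, geom_root _ _ hnegN hne2]
    ring
end

section
/- Let T ≥ 3 be an odd integer and m a positive integer. Then Σ_{x ∈ ℤ/2^Tℤ} exp(−2πi x m/2^T) χ₈(x)(1 + i^x) equals 2^{T−3/2} · χ₈(m₁) · (1 + (−1)^{(m₁−1)/2}) if v_2(m) = T−3, where m₁ = m/2^{T−3}, and equals 0 otherwise. (Here 2^{T−3/2} is the real power; the summand is well defined since x mod 2^T determines x mod 8; this is the value of Σ_{x ∈ ℤ/2^Tℤ} exp(−2πi x m/2^T)(2/x)^T(1 + i^x) for odd T, because (2/x)^T = χ₈(x).) -/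
open scoped BigOperators
open Complex Finset

private lemma aux_sum_zmod (n : ℕ) [NeZero n] (f : ℕ → ℂ) :
    ∑ x : ZMod n, f x.val = ∑ i ∈ Finset.range n, f i :=
  Finset.sum_nbij' (fun x => x.val) (fun i => (i : ZMod n))
    (fun a _ => Finset.mem_range.mpr (ZMod.val_lt a))
    (fun _ _ => Finset.mem_univ _)
    (fun a _ => ZMod.natCast_rightInverse a)
    (fun i hi => ZMod.val_cast_of_lt (Finset.mem_range.mp hi))
    (fun _ _ => rfl)

private lemma aux_sum_range_mul (a : ℕ) (f : ℕ → ℂ) :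
    ∑ i ∈ Finset.range (a * 8), f i
      = ∑ k ∈ Finset.range a, ∑ y ∈ Finset.range 8, f (8 * k + y) := by
  rw [← Finset.sum_product']
  refine Finset.sum_nbij' (fun i => (i / 8, i % 8)) (fun p => 8 * p.1 + p.2) ?_ ?_ ?_ ?_ ?_
  · intro i hi
    simp only [Finset.mem_range] at hi
    simp only [Finset.mem_product, Finset.mem_range]
    omega
  · intro p hp
    simp only [Finset.mem_product, Finset.mem_range] at hp
    simp only [Finset.mem_range]
    omega
  · intro i _; show 8 * (i / 8) + i % 8 = i; omega
  · intro p hp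
    simp only [Finset.mem_product, Finset.mem_range] at hp
    ext <;> simp <;> omega
  · intro i _
    rw [Nat.div_add_mod]

private lemma aux_geom (N M : ℕ) (hN : 0 < N) :
    ∑ k ∈ Finset.range N, Complex.exp (-(2 * Real.pi * Complex.I) * M / N) ^ k
      = if N ∣ M then (N : ℂ) else 0 := by
  have h2πI : (2 * (Real.pi : ℂ) * Complex.I) ≠ 0 := by
    simp [Real.pi_ne_zero, Complex.I_ne_zero]
  have hNne : (N : ℂ) ≠ 0 := Nat.cast_ne_zero.mpr hN.ne'
  by_cases h : N ∣ M
  · obtain ⟨c, rfl⟩ := h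
    have hw1 : Complex.exp (-(2 * Real.pi * Complex.I) * (N * c : ℕ) / N) = 1 := by
      rw [show -(2 * (Real.pi : ℂ) * Complex.I) * ((N * c : ℕ) : ℂ) / N
          = ((-(c : ℤ) : ℤ) : ℂ) * (2 * Real.pi * Complex.I) by
        push_cast; field_simp]
      exact Complex.exp_int_mul_two_pi_mul_I _
    rw [if_pos (Dvd.intro c rfl)]
    simp only [hw1, one_pow]
    simp
  · have hwN : Complex.exp (-(2 * Real.pi * Complex.I) * M / N) ^ N = 1 := by
      rw [← Complex.exp_nat_mul,
        show (N : ℂ) * (-(2 * (Real.pi : ℂ) * Complex.I) * M / N)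
          = ((-(M : ℤ) : ℤ) : ℂ) * (2 * Real.pi * Complex.I) by
        push_cast; field_simp]
      exact Complex.exp_int_mul_two_pi_mul_I _
    have hw1 : Complex.exp (-(2 * Real.pi * Complex.I) * M / N) ≠ 1 := by
      intro hcon
      rw [Complex.exp_eq_one_iff] at hcon
      obtain ⟨k, hk⟩ := hcon
      apply h
      have hM : (M : ℂ) = ((-k * N : ℤ) : ℂ) := by
        field_simp at hk
        have h2 : (2 * (Real.pi : ℂ) * Complex.I) * ((M : ℂ) - (-k * N : ℤ))
            = (2 * (Real.pi : ℂ) * Complex.I) * 0 := by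
          push_cast
          linear_combination (-(2 * (Real.pi : ℂ) * Complex.I)) * hk
        have := mul_left_cancel₀ h2πI h2
        linear_combination this
      have : (M : ℤ) = -k * N := by exact_mod_cast hM
      exact (Int.natCast_dvd_natCast).mp ⟨-k, by rw [this]; ring⟩
    rw [geom_sum_eq hw1, hwN]
    simp [h]

theorem sum_exp_chi8_one_add_I_pow (T : ℕ) (hT : 3 ≤ T) (hTodd : Odd T)
    (m : ℕ) (hm : 0 < m)
    (S : ℂ)
    (hS : S = ∑ x : ZMod (2 ^ T),
      Complex.exp (-(2 * Real.pi * Complex.I) * (x.val : ℂ) * (m : ℂ) / (2 : ℂ) ^ T) *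
        ((ZMod.χ₈ (x.val : ZMod 8) : ℤ) : ℂ) * (1 + Complex.I ^ x.val)) :
    (padicValNat 2 m = T - 3 →
      S = (((2 : ℝ) ^ ((T : ℝ) - 3 / 2) : ℝ) : ℂ) *
        ((ZMod.χ₈ ((m / 2 ^ (T - 3) : ℕ) : ZMod 8) : ℤ) : ℂ) *
        (1 + (-1 : ℂ) ^ ((m / 2 ^ (T - 3) - 1) / 2))) ∧
    (padicValNat 2 m ≠ T - 3 → S = 0) := by
  have hpi : (Real.pi : ℂ) ≠ 0 := by exact_mod_cast Real.pi_ne_zero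
  set n : ℕ := T - 3 with hn
  have hTn : T = n + 3 := by omega
  set f : ℕ → ℂ := fun v =>
    Complex.exp (-(2 * Real.pi * Complex.I) * (v : ℂ) * (m : ℂ) / (2 : ℂ) ^ T) *
      ((ZMod.χ₈ ((v : ℕ) : ZMod 8) : ℤ) : ℂ) * (1 + Complex.I ^ v) with hf
  haveI : NeZero (2 ^ T) := ⟨pow_ne_zero _ two_ne_zero⟩
  have h2T : (2 : ℕ) ^ T = 2 ^ n * 8 := by rw [hTn]; ring
  have h2Tc : (2 : ℂ) ^ T = 2 ^ n * 8 := by rw [hTn]; ring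
  have h2nc : ((2 ^ n : ℕ) : ℂ) = (2 : ℂ) ^ n := by push_cast; ring
  have h2nne : ((2 : ℂ)) ^ n ≠ 0 := pow_ne_zero _ two_ne_zero
  set w : ℂ := Complex.exp (-(2 * Real.pi * Complex.I) * (m : ℂ) / ((2 ^ n : ℕ) : ℂ)) with hw
  -- step A : S = G * F8
  have hfky : ∀ k y : ℕ, f (8 * k + y) = w ^ k * f y := by
    intro k y
    have hexp : Complex.exp (-(2 * Real.pi * Complex.I) * ((8 * k + y : ℕ) : ℂ) * (m : ℂ) / (2 : ℂ) ^ T)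
        = w ^ k * Complex.exp (-(2 * Real.pi * Complex.I) * (y : ℂ) * (m : ℂ) / (2 : ℂ) ^ T) := by
      rw [hw, ← Complex.exp_nat_mul, ← Complex.exp_add]
      congr 1
      rw [h2Tc, h2nc]
      push_cast
      field_simp
      ring
    have hchi : (((8 * k + y : ℕ) : ℕ) : ZMod 8) = ((y : ℕ) : ZMod 8) := by
      push_cast
      simp [show (8 : ZMod 8) = 0 from by decide]
    have hIp : Complex.I ^ (8 * k + y) = Complex.I ^ y := by
      rw [pow_add, pow_mul, show Complex.I ^ 8 = 1 by
        rw [show (8 : ℕ) = 4 * 2 from rfl, pow_mul, Complex.I_pow_four, one_pow], one_pow, one_mul]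
    rw [hf]
    simp only
    rw [hexp, hchi, hIp]
    ring
  set F8 : ℂ := ∑ y ∈ Finset.range 8, f y with hF8def
  set G : ℂ := ∑ k ∈ Finset.range (2 ^ n), w ^ k with hGdef
  have hSGF : S = G * F8 := by
    rw [hS, show (∑ x : ZMod (2 ^ T),
      Complex.exp (-(2 * Real.pi * Complex.I) * (x.val : ℂ) * (m : ℂ) / (2 : ℂ) ^ T) *
        ((ZMod.χ₈ (x.val : ZMod 8) : ℤ) : ℂ) * (1 + Complex.I ^ x.val))
        = ∑ x : ZMod (2 ^ T), f x.val from rfl,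
      aux_sum_zmod, h2T, aux_sum_range_mul]
    rw [hGdef, hF8def, Finset.sum_mul]
    refine Finset.sum_congr rfl fun k _ => ?_
    rw [Finset.mul_sum]
    exact Finset.sum_congr rfl fun y _ => hfky k y
  have hG : G = if 2 ^ n ∣ m then ((2 ^ n : ℕ) : ℂ) else 0 := aux_geom (2 ^ n) m (pow_pos (by norm_num : (0:ℕ) < 2) n)
  by_cases hdvd : 2 ^ n ∣ m
  · -- divisible case
    set m₁ : ℕ := m / 2 ^ n with hm₁def
    have hm₁eq : m = 2 ^ n * m₁ := (Nat.mul_div_cancel' hdvd).symm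
    have hm₁pos : 0 < m₁ := Nat.div_pos (Nat.le_of_dvd hm hdvd) (pow_pos (by norm_num) n)
    set ω : ℂ := Complex.exp (-(2 * Real.pi * Complex.I) / 8) with hω
    have hω2 : ω ^ 2 = -Complex.I := by
      have h := Complex.exp_nat_mul (-(2 * (Real.pi : ℂ) * Complex.I) / 8) 2
      rw [hω, ← h,
        show ((2 : ℕ) : ℂ) * (-(2 * (Real.pi : ℂ) * Complex.I) / 8)
          = ((-(Real.pi / 2) : ℝ) : ℂ) * Complex.I by push_cast; ring,
        Complex.exp_mul_I, ← Complex.ofReal_cos, ← Complex.ofReal_sin,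
        Real.cos_neg, Real.sin_neg, Real.cos_pi_div_two, Real.sin_pi_div_two]
      norm_num
    have hω4 : ω ^ 4 = -1 := by
      rw [show (ω ^ 4 : ℂ) = (ω ^ 2) ^ 2 from by ring, hω2]
      simp [neg_sq, Complex.I_sq]
    have hω8 : ω ^ 8 = 1 := by
      rw [show (ω ^ 8 : ℂ) = (ω ^ 4) ^ 2 from by ring, hω4]
      norm_num
    have hωval : ω = ((Real.sqrt 2 : ℝ) : ℂ) / 2 * (1 - Complex.I) := by
      rw [hω,
        show -(2 * (Real.pi : ℂ) * Complex.I) / 8 = ((-(Real.pi / 4) : ℝ) : ℂ) * Complex.I by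
          push_cast; ring,
        Complex.exp_mul_I, ← Complex.ofReal_cos, ← Complex.ofReal_sin,
        Real.cos_neg, Real.sin_neg, Real.cos_pi_div_four, Real.sin_pi_div_four]
      push_cast
      ring
    have hωs : ω * (1 + Complex.I) = ((Real.sqrt 2 : ℝ) : ℂ) := by
      rw [hωval]
      linear_combination (-(((Real.sqrt 2 : ℝ) : ℂ)) / 2) * Complex.I_sq
    have hp3 : ω ^ 3 = -Complex.I * ω := by linear_combination ω * hω2
    have hp5 : ω ^ 5 = -ω := by linear_combination ω * hω4
    have hp7 : ω ^ 7 = Complex.I * ω := by linear_combination ω ^ 3 * hω4 + (-ω) * hω2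
    have he : ∀ y : ℕ,
        Complex.exp (-(2 * Real.pi * Complex.I) * (y : ℂ) * (m : ℂ) / (2 : ℂ) ^ T)
          = (ω ^ m₁) ^ y := by
      intro y
      rw [← pow_mul, hω, ← Complex.exp_nat_mul]
      congr 1
      rw [h2Tc, show (m : ℂ) = 2 ^ n * (m₁ : ℂ) by rw [hm₁eq]; push_cast; ring]
      push_cast
      field_simp
    have hζr : ω ^ m₁ = ω ^ (m₁ % 8) := by
      conv_lhs => rw [← Nat.div_add_mod m₁ 8]
      rw [pow_add, pow_mul, hω8, one_pow, one_mul]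
    have hI2 := Complex.I_sq
    have hI3 : Complex.I ^ 3 = -Complex.I := by rw [pow_succ, hI2, neg_one_mul]
    have hI4 : Complex.I ^ 4 = 1 := Complex.I_pow_four
    have hI5 : Complex.I ^ 5 = Complex.I := by rw [pow_succ, hI4, one_mul]
    have hI6 : Complex.I ^ 6 = -1 := by rw [pow_succ, hI5, Complex.I_mul_I]
    have hI7 : Complex.I ^ 7 = -Complex.I := by rw [pow_succ, hI6, neg_one_mul]
    have hF8 : F8 = (1 + Complex.I) * (ω ^ m₁ - (ω ^ m₁) ^ 5)
        + (1 - Complex.I) * ((ω ^ m₁) ^ 7 - (ω ^ m₁) ^ 3) := by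
      rw [hF8def]
      simp only [Finset.sum_range_succ, Finset.sum_range_zero, hf]
      rw [he 0, he 1, he 2, he 3, he 4, he 5, he 6, he 7]
      rw [show (ZMod.χ₈ (((0 : ℕ)) : ZMod 8) : ℤ) = 0 from by decide,
          show (ZMod.χ₈ (((1 : ℕ)) : ZMod 8) : ℤ) = 1 from by decide,
          show (ZMod.χ₈ (((2 : ℕ)) : ZMod 8) : ℤ) = 0 from by decide,
          show (ZMod.χ₈ (((3 : ℕ)) : ZMod 8) : ℤ) = -1 from by decide,
          show (ZMod.χ₈ (((4 : ℕ)) : ZMod 8) : ℤ) = 0 from by decide,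
          show (ZMod.χ₈ (((5 : ℕ)) : ZMod 8) : ℤ) = -1 from by decide,
          show (ZMod.χ₈ (((6 : ℕ)) : ZMod 8) : ℤ) = 0 from by decide,
          show (ZMod.χ₈ (((7 : ℕ)) : ZMod 8) : ℤ) = 1 from by decide]
      rw [hI3, hI5, hI7]
      push_cast
      ring
    have hS2n : S = ((2 : ℂ) ^ n) * F8 := by rw [hSGF, hG, if_pos hdvd, h2nc]
    have hnv : 2 ∣ m₁ → padicValNat 2 m ≠ n := by
      rintro ⟨t, ht⟩ hpv
      exact pow_succ_padicValNat_not_dvd hm.ne'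
        (by rw [hpv]; exact ⟨t, by rw [hm₁eq, ht]; ring⟩)
    have hS0 : (ω ^ m₁) ^ 4 = 1 → S = 0 := by
      intro h4
      rw [hS2n, hF8]
      linear_combination ((2 : ℂ) ^ n * ((1 - Complex.I) * (ω ^ m₁) ^ 3
        - (1 + Complex.I) * (ω ^ m₁))) * h4
    have hoddpv : ¬ 2 ∣ m₁ → padicValNat 2 m = n := by
      intro hodd
      rw [hm₁eq, padicValNat.mul (pow_ne_zero n two_ne_zero) hm₁pos.ne',
        padicValNat.prime_pow, padicValNat.eq_zero_of_not_dvd hodd, add_zero]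
    have hpow : ((((2 : ℝ) ^ ((T : ℝ) - 3 / 2) : ℝ)) : ℂ)
        = (2 : ℂ) ^ n * 2 * ((Real.sqrt 2 : ℝ) : ℂ) := by
      have hTr : (T : ℝ) - 3 / 2 = ((n : ℕ) : ℝ) + 1 + (1 / 2 : ℝ) := by
        rw [hTn]; push_cast; ring
      rw [hTr, Real.rpow_add (by norm_num : (0 : ℝ) < 2),
        Real.rpow_add (by norm_num : (0 : ℝ) < 2), Real.rpow_natCast, Real.rpow_one,
        ← Real.sqrt_eq_rpow]
      push_cast
      ring
    have hχm : ((m₁ : ℕ) : ZMod 8) = ((m₁ % 8 : ℕ) : ZMod 8) := (ZMod.natCast_mod m₁ 8).symm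
    have hr8 : m₁ % 8 < 8 := Nat.mod_lt _ (by norm_num)
    interval_cases hr : m₁ % 8
    · exact ⟨fun hpv => absurd hpv (hnv (by omega)),
        fun _ => hS0 (by rw [hζr]; norm_num)⟩
    · -- m₁ % 8 = 1
      have hpv := hoddpv (by omega)
      refine ⟨fun _ => ?_, fun hne => absurd hpv hne⟩
      have h1 : ω ^ m₁ = ω := by rw [hζr, pow_one]
      have h3 : (ω ^ m₁) ^ 3 = -Complex.I * ω := by rw [h1, hp3]
      have h5 : (ω ^ m₁) ^ 5 = -ω := by rw [h1, hp5]
      have h7 : (ω ^ m₁) ^ 7 = Complex.I * ω := by rw [h1, hp7]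
      have hχ : (ZMod.χ₈ ((m₁ : ℕ) : ZMod 8) : ℤ) = 1 := by rw [hχm]; decide
      have hev : (-1 : ℂ) ^ ((m₁ - 1) / 2) = 1 :=
        Even.neg_one_pow (Nat.even_iff.mpr (by omega))
      rw [hS2n, hF8, h3, h5, h7, h1, hχ, hev, hpow, ← hωs]
      push_cast
      linear_combination (-(2 : ℂ) ^ n * 2 * ω) * Complex.I_sq
    · exact ⟨fun hpv => absurd hpv (hnv (by omega)),
        fun _ => hS0 (by
          rw [hζr, show (((ω ^ 2) ^ 4 : ℂ)) = (ω ^ 8) ^ 1 from by ring, hω8, one_pow])⟩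
    · -- m₁ % 8 = 3
      have hpv := hoddpv (by omega)
      refine ⟨fun _ => ?_, fun hne => absurd hpv hne⟩
      have h1 : ω ^ m₁ = -Complex.I * ω := by rw [hζr, hp3]
      have h3 : (ω ^ m₁) ^ 3 = ω := by
        rw [hζr, show (((ω ^ 3) ^ 3 : ℂ)) = ω ^ 8 * ω from by ring, hω8, one_mul]
      have h5 : (ω ^ m₁) ^ 5 = Complex.I * ω := by
        rw [hζr, show (((ω ^ 3) ^ 5 : ℂ)) = ω ^ 8 * ω ^ 7 from by ring, hω8, one_mul, hp7]
      have h7 : (ω ^ m₁) ^ 7 = -ω := by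
        rw [hζr, show (((ω ^ 3) ^ 7 : ℂ)) = (ω ^ 8) ^ 2 * ω ^ 5 from by ring, hω8,
          one_pow, one_mul, hp5]
      have hodd : (-1 : ℂ) ^ ((m₁ - 1) / 2) = -1 :=
        Odd.neg_one_pow (Nat.odd_iff.mpr (by omega))
      have hF80 : F8 = 0 := by
        rw [hF8, h3, h5, h7, h1]
        linear_combination (-2 * ω) * Complex.I_sq
      rw [hS2n, hF80, mul_zero, hodd, show ((1 : ℂ) + -1) = 0 from by ring, mul_zero]
    · exact ⟨fun hpv => absurd hpv (hnv (by omega)),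
        fun _ => hS0 (by
          rw [hζr, show (((ω ^ 4) ^ 4 : ℂ)) = (ω ^ 8) ^ 2 from by ring, hω8, one_pow])⟩
    · -- m₁ % 8 = 5
      have hpv := hoddpv (by omega)
      refine ⟨fun _ => ?_, fun hne => absurd hpv hne⟩
      have h1 : ω ^ m₁ = -ω := by rw [hζr, hp5]
      have h3 : (ω ^ m₁) ^ 3 = Complex.I * ω := by
        rw [hζr, show (((ω ^ 5) ^ 3 : ℂ)) = ω ^ 8 * ω ^ 7 from by ring, hω8, one_mul, hp7]
      have h5 : (ω ^ m₁) ^ 5 = ω := by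
        rw [hζr, show (((ω ^ 5) ^ 5 : ℂ)) = (ω ^ 8) ^ 3 * ω from by ring, hω8,
          one_pow, one_mul]
      have h7 : (ω ^ m₁) ^ 7 = -Complex.I * ω := by
        rw [hζr, show (((ω ^ 5) ^ 7 : ℂ)) = (ω ^ 8) ^ 4 * ω ^ 3 from by ring, hω8,
          one_pow, one_mul, hp3]
      have hχ : (ZMod.χ₈ ((m₁ : ℕ) : ZMod 8) : ℤ) = -1 := by rw [hχm]; decide
      have hev : (-1 : ℂ) ^ ((m₁ - 1) / 2) = 1 :=
        Even.neg_one_pow (Nat.even_iff.mpr (by omega))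
      rw [hS2n, hF8, h3, h5, h7, h1, hχ, hev, hpow, ← hωs]
      push_cast
      linear_combination ((2 : ℂ) ^ n * 2 * ω) * Complex.I_sq
    · exact ⟨fun hpv => absurd hpv (hnv (by omega)),
        fun _ => hS0 (by
          rw [hζr, show (((ω ^ 6) ^ 4 : ℂ)) = (ω ^ 8) ^ 3 from by ring, hω8, one_pow])⟩
    · -- m₁ % 8 = 7
      have hpv := hoddpv (by omega)
      refine ⟨fun _ => ?_, fun hne => absurd hpv hne⟩
      have h1 : ω ^ m₁ = Complex.I * ω := by rw [hζr, hp7]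
      have h3 : (ω ^ m₁) ^ 3 = -ω := by
        rw [hζr, show (((ω ^ 7) ^ 3 : ℂ)) = (ω ^ 8) ^ 2 * ω ^ 5 from by ring, hω8,
          one_pow, one_mul, hp5]
      have h5 : (ω ^ m₁) ^ 5 = -Complex.I * ω := by
        rw [hζr, show (((ω ^ 7) ^ 5 : ℂ)) = (ω ^ 8) ^ 4 * ω ^ 3 from by ring, hω8,
          one_pow, one_mul, hp3]
      have h7 : (ω ^ m₁) ^ 7 = ω := by
        rw [hζr, show (((ω ^ 7) ^ 7 : ℂ)) = (ω ^ 8) ^ 6 * ω from by ring, hω8,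
          one_pow, one_mul]
      have hodd : (-1 : ℂ) ^ ((m₁ - 1) / 2) = -1 :=
        Odd.neg_one_pow (Nat.odd_iff.mpr (by omega))
      have hF80 : F8 = 0 := by
        rw [hF8, h3, h5, h7, h1]
        linear_combination (2 * ω) * Complex.I_sq
      rw [hS2n, hF80, mul_zero, hodd, show ((1 : ℂ) + -1) = 0 from by ring, mul_zero]
  · -- not divisible
    have hS0 : S = 0 := by rw [hSGF, hG, if_neg hdvd, zero_mul]
    refine ⟨fun hpv => ?_, fun _ => hS0⟩
    exfalso
    apply hdvd
    have h := pow_padicValNat_dvd (p := 2) (n := m)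
    rwa [hpv] at h
end
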